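/- arXiv:2512.11355 — 2 statements merged into one kernel-verified Lean document; each statement's English description precedes it below -/
import Mathlib

section
/- Let d be a squarefree positive integer, K = ℚ(√−d) the imaginary quadratic field inside ℂ, 𝒪_K its ring of integers, and q(x,y) = Tr_{K/ℚ}(x·ȳ) the trace form (an even positive definite bilinear form on 𝒪_K). Then there exists a primitive isometric embedding of (𝒪_K, q) into U ⊕ U: that is, an injective ℤ-linear map f : 𝒪_K → ℤ⁴ such that B(f(x), f(y)) = q(x,y) for all x, y ∈ 𝒪_K, where B is the bilinear form on ℤ⁴ with Gram matrix the block-diagonal matrix with two blocks [[0,1],[1,0]], and such that the quotient ℤ⁴ / f(𝒪_K) is torsion-free. -/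
/-!
Since `σ` is the nontrivial automorphism of the quadratic extension `K / ℚ`, `x * σ x` is the
norm of `x`, so the form `q(x, y) = Tr(x * σ y)` is symmetric, integral on `𝒪_K` and even:
`q(x, x) = 2 N(x)`. Any even binary lattice, with Gram matrix `[[2a, u], [u, 2c]]` in a basis
`e₀, e₁`, embeds isometrically into `U ⊕ U` by `e₀ ↦ (1, a, 0, 0)`, `e₁ ↦ (0, u, 1, c)`, and the
image is primitive because the coordinates `0` and `2` read off the coefficients.
-/

open Matrix

/-- The Gram matrix of `U ⊕ U`, where `U` is the hyperbolic plane. -/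
def hyperbolicUU : Matrix (Fin 4) (Fin 4) ℤ :=
  !![0, 1, 0, 0;
     1, 0, 0, 0;
     0, 0, 0, 1;
     0, 0, 1, 0]

open NumberField

namespace Matrix

def evenBinaryToUU (a u c : ℤ) : Matrix (Fin 4) (Fin 2) ℤ :=
  !![1, 0; a, u; 0, 1; 0, c]

variable (a u c : ℤ)

theorem evenBinaryToUU_mulVec (w : Fin 2 → ℤ) :
    evenBinaryToUU a u c *ᵥ w = ![w 0, a * w 0 + u * w 1, w 1, c * w 1] := by
  ext i
  fin_cases i <;> simp [evenBinaryToUU, mulVec, dotProduct, Fin.sum_univ_two]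

theorem evenBinaryToUU_transpose_mul_hyperbolicUU_mul :
    (evenBinaryToUU a u c)ᵀ * hyperbolicUU * evenBinaryToUU a u c = !![2 * a, u; u, 2 * c] := by
  rw [evenBinaryToUU, hyperbolicUU]
  ext i j
  fin_cases i <;> fin_cases j <;> simp [Matrix.mul_apply, Fin.sum_univ_four] <;> ring

theorem evenBinaryToUU_mulVec_dotProduct_hyperbolicUU (v w : Fin 2 → ℤ) :
    evenBinaryToUU a u c *ᵥ v ⬝ᵥ hyperbolicUU *ᵥ (evenBinaryToUU a u c *ᵥ w) =
      v ⬝ᵥ !![2 * a, u; u, 2 * c] *ᵥ w := by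
  rw [← evenBinaryToUU_transpose_mul_hyperbolicUU_mul, dotProduct_mulVec, vecMul_mulVec,
    ← dotProduct_mulVec, mulVec_mulVec]

theorem evenBinaryToUU_mulVec_injective : Function.Injective (evenBinaryToUU a u c *ᵥ ·) := by
  intro v w h
  have h0 := congrFun h 0
  have h2 := congrFun h 2
  simp only [evenBinaryToUU_mulVec] at h0 h2
  ext i
  fin_cases i
  exacts [h0, h2]

theorem mem_range_evenBinaryToUU_of_smul_mem {n : ℤ} (hn : n ≠ 0) {v : Fin 4 → ℤ}
    (hv : n • v ∈ LinearMap.range (evenBinaryToUU a u c).mulVecLin) :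
    v ∈ LinearMap.range (evenBinaryToUU a u c).mulVecLin := by
  obtain ⟨w, hw⟩ := hv
  rw [mulVecLin_apply, evenBinaryToUU_mulVec] at hw
  obtain ⟨h0, h1, h2, h3⟩ : w 0 = n * v 0 ∧ a * w 0 + u * w 1 = n * v 1 ∧ w 1 = n * v 2 ∧
      c * w 1 = n * v 3 :=
    ⟨congrFun hw 0, congrFun hw 1, congrFun hw 2, congrFun hw 3⟩
  refine ⟨![v 0, v 2], ?_⟩
  rw [mulVecLin_apply, evenBinaryToUU_mulVec]
  ext i
  fin_cases i <;> simp only [Fin.zero_eta, Fin.mk_one, Fin.reduceFinMk, Fin.isValue, cons_val]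
  · exact mul_left_cancel₀ hn (by linear_combination h1 - a * h0 - u * h2)
  · exact mul_left_cancel₀ hn (by linear_combination h3 - c * h2)

end Matrix

theorem exists_primitive_isometry_hyperbolicUU {M : Type*} [AddCommGroup M] [Module.Free ℤ M]
    [Module.Finite ℤ M] (hM : Module.finrank ℤ M = 2) (Q : LinearMap.BilinForm ℤ M)
    (hQ : ∀ x y, Q x y = Q y x) (heven : ∀ x, Even (Q x x)) :
    ∃ f : M →ₗ[ℤ] (Fin 4 → ℤ), Function.Injective f ∧
      (∀ x y, f x ⬝ᵥ hyperbolicUU *ᵥ f y = Q x y) ∧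
      ∀ (n : ℤ) (v : Fin 4 → ℤ), n ≠ 0 → n • v ∈ LinearMap.range f → v ∈ LinearMap.range f := by
  let b := Module.finBasisOfFinrankEq ℤ M hM
  obtain ⟨a, ha⟩ := (heven (b 0)).two_dvd
  obtain ⟨c, hc⟩ := (heven (b 1)).two_dvd
  set u := Q (b 0) (b 1)
  have hGram : LinearMap.toMatrix₂ b b Q = !![2 * a, u; u, 2 * c] := by
    ext i j
    fin_cases i <;> fin_cases j <;> simp [LinearMap.toMatrix₂_apply, ha, hc, u, hQ (b 1)]
  refine ⟨(evenBinaryToUU a u c).mulVecLin ∘ₗ b.equivFun.toLinearMap,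
    (evenBinaryToUU_mulVec_injective a u c).comp b.equivFun.injective, fun x y => ?_,
    fun n v hn => ?_⟩
  · rw [apply_eq_dotProduct_toMatrix₂_mulVec b b Q x y, hGram]
    exact evenBinaryToUU_mulVec_dotProduct_hyperbolicUU a u c _ _
  · rw [LinearMap.range_comp_of_range_eq_top _ b.equivFun.range]
    exact mem_range_evenBinaryToUU_of_smul_mem a u c hn

namespace Algebra.IsQuadraticExtension

variable {F K : Type*} [Field F] [Field K] [Algebra F K] [IsQuadraticExtension F K]
  [Algebra.IsSeparable F K]

theorem natCard_gal_eq_two : Nat.card Gal(K/F) = 2 := by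
  rw [IsGalois.card_aut_eq_finrank, finrank_eq_two]

theorem eq_one_or_eq_of_ne_one {σ : Gal(K/F)} (hσ : σ ≠ 1) (τ : Gal(K/F)) : τ = 1 ∨ τ = σ := by
  obtain ⟨ρ, -, hρ⟩ := (Nat.card_eq_two_iff' (1 : Gal(K/F))).mp natCard_gal_eq_two
  by_cases hτ : τ = 1
  · exact .inl hτ
  · exact .inr ((hρ τ hτ).trans (hρ σ hσ).symm)

theorem apply_apply (σ : Gal(K/F)) (x : K) : σ (σ x) = x := by
  have h : σ ^ 2 = 1 := natCard_gal_eq_two (F := F) (K := K) ▸ pow_card_eq_one'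
  simpa [sq] using congrArg (· x) h

theorem algebraMap_norm_eq_mul_apply {σ : Gal(K/F)} (hσ : σ ≠ 1) (x : K) :
    algebraMap F K (norm F x) = x * σ x := by
  rw [norm_eq_prod_automorphisms, Fintype.prod_eq_mul 1 σ hσ.symm
    fun τ hτ => (hτ.2 ((eq_one_or_eq_of_ne_one hσ τ).resolve_left hτ.1)).elim]
  rfl

end Algebra.IsQuadraticExtension

namespace NumberField

variable {K : Type*} [Field K] [NumberField K]

noncomputable def twistedTraceForm (σ : K ≃ₐ[ℚ] K) : LinearMap.BilinForm ℤ (𝓞 K) :=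
  ((LinearMap.mul ℤ (𝓞 K)).compl₂
    (RingOfIntegers.mapRingEquiv σ.toRingEquiv).toRingHom.toIntAlgHom.toLinearMap).compr₂
      (Algebra.trace ℤ (𝓞 K))

theorem cast_twistedTraceForm_apply (σ : K ≃ₐ[ℚ] K) (x y : 𝓞 K) :
    (twistedTraceForm σ x y : ℚ) = Algebra.trace ℚ K (x * σ y) := by
  simp [twistedTraceForm, Algebra.coe_trace_int, RingOfIntegers.mapRingEquiv_apply]

theorem twistedTraceForm_comm [Algebra.IsQuadraticExtension ℚ K] (σ : K ≃ₐ[ℚ] K) (x y : 𝓞 K) :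
    twistedTraceForm σ x y = twistedTraceForm σ y x := by
  have h : (twistedTraceForm σ x y : ℚ) = twistedTraceForm σ y x := by
    rw [cast_twistedTraceForm_apply, cast_twistedTraceForm_apply,
      ← Algebra.trace_eq_of_algEquiv σ, map_mul, Algebra.IsQuadraticExtension.apply_apply,
      mul_comm]
  exact_mod_cast h

theorem twistedTraceForm_self [Algebra.IsQuadraticExtension ℚ K] {σ : K ≃ₐ[ℚ] K} (hσ : σ ≠ 1)
    (x : 𝓞 K) : twistedTraceForm σ x x = 2 * Algebra.norm ℤ x := by
  have h : (twistedTraceForm σ x x : ℚ) = 2 * Algebra.norm ℤ x := by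
    rw [cast_twistedTraceForm_apply,
      ← Algebra.IsQuadraticExtension.algebraMap_norm_eq_mul_apply hσ, Algebra.trace_algebraMap,
      Algebra.IsQuadraticExtension.finrank_eq_two, Algebra.coe_norm_int, nsmul_eq_mul,
      Nat.cast_ofNat]
  exact_mod_cast h

end NumberField

theorem ringOfIntegers_primitively_embeds_in_UU_general
    (d : ℕ) (hd0 : 0 < d)
    (K : Type) [Field K] [NumberField K]
    (hdeg : Module.finrank ℚ K = 2)
    (ω : K) (hω : ω ^ 2 = -(d : K))
    (σ : K ≃ₐ[ℚ] K) (hσ : σ ω = -ω) :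
    ∃ f : NumberField.RingOfIntegers K →ₗ[ℤ] (Fin 4 → ℤ),
      Function.Injective f ∧
      (∀ x y : NumberField.RingOfIntegers K,
        ((f x ⬝ᵥ hyperbolicUU.mulVec (f y) : ℤ) : ℚ) =
          Algebra.trace ℚ K ((x : K) * σ (y : K))) ∧
      (∀ (n : ℤ) (v : Fin 4 → ℤ), n ≠ 0 →
        n • v ∈ LinearMap.range f → v ∈ LinearMap.range f) := by
  have hω0 : ω ≠ 0 := by
    rintro rfl
    simp [hd0.ne'] at hω
  have hσ1 : σ ≠ 1 := fun h => hω0 (CharZero.eq_neg_self_iff.mp (by simpa [h] using hσ))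
  have : Algebra.IsQuadraticExtension ℚ K := ⟨hdeg⟩
  obtain ⟨f, hf, hiso, hprim⟩ := exists_primitive_isometry_hyperbolicUU
    (by rw [RingOfIntegers.rank, hdeg]) (twistedTraceForm σ) (twistedTraceForm_comm σ)
    fun x => twistedTraceForm_self hσ1 x ▸ even_two_mul _
  exact ⟨f, hf, fun x y => by rw [hiso, cast_twistedTraceForm_apply], hprim⟩

/-- **Primitive embedding of the ring of integers of an imaginary quadratic field into
`U ⊕ U`.**  Let `d` be a squarefree positive integer, `K = ℚ(√-d)` (an abstract number
field of degree 2 over `ℚ` containing `ω` with `ω ^ 2 = -d`), `σ` the nontrivial Galois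
automorphism (complex conjugation, `σ ω = -ω`), and `q(x, y) = Tr_{K/ℚ}(x * σ y)` the
trace form on `𝒪_K`.  Then there is a primitive isometric embedding of `(𝒪_K, q)` into
`U ⊕ U`: an injective `ℤ`-linear map `f : 𝒪_K → ℤ⁴` such that `B(f x, f y) = q(x, y)`
for all `x, y`, where `B` is the bilinear form with Gram matrix `hyperbolicUU`, and such
that the cokernel of `f` is torsion-free. -/
theorem ringOfIntegers_primitively_embeds_in_UU
    (d : ℕ) (hd : Squarefree d) (hd0 : 0 < d)
    (K : Type) [Field K] [NumberField K]
    (hdeg : Module.finrank ℚ K = 2)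
    (ω : K) (hω : ω ^ 2 = -(d : K))
    (σ : K ≃ₐ[ℚ] K) (hσ : σ ω = -ω) :
    ∃ f : NumberField.RingOfIntegers K →ₗ[ℤ] (Fin 4 → ℤ),
      Function.Injective f ∧
      (∀ x y : NumberField.RingOfIntegers K,
        ((f x ⬝ᵥ hyperbolicUU.mulVec (f y) : ℤ) : ℚ) =
          Algebra.trace ℚ K ((x : K) * σ (y : K))) ∧
      (∀ (n : ℤ) (v : Fin 4 → ℤ), n ≠ 0 →
        n • v ∈ LinearMap.range f → v ∈ LinearMap.range f) :=
  ringOfIntegers_primitively_embeds_in_UU_general d hd0 K hdeg ω hω σ hσ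
end

section
/- Let d be a squarefree positive integer, K = ℚ(√−d) the imaginary quadratic field inside ℂ, 𝒪_K its ring of integers, and q(x,y) = Tr_{K/ℚ}(x·ȳ) the trace form on 𝒪_K. Let L be the rank-22 lattice E8(−1) ⊕ E8(−1) ⊕ U ⊕ U ⊕ A2(−1), i.e. ℤ²² equipped with the bilinear form whose Gram matrix is block diagonal with two blocks equal to the negative of the Cartan matrix of E8, two blocks [[0,1],[1,0]], and one block [[−2,1],[1,−2]]. Then there exists an embedding of lattices (𝒪_K, q) ↪ L, i.e. an injective ℤ-linear map f : 𝒪_K → ℤ²² with B_L(f(x), f(y)) = q(x,y) for all x, y ∈ 𝒪_K. -/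
open Matrix

/-- The Gram matrix of the rank-22 lattice `E8(-1) ⊕ E8(-1) ⊕ U ⊕ U ⊕ A2(-1)`:
block diagonal with two blocks equal to the negative of the Cartan matrix of `E₈`
(indices `0..7` and `8..15`), two hyperbolic blocks `[[0,1],[1,0]]` (indices `16,17`
and `18,19`), and one block `[[-2,1],[1,-2]]` (indices `20,21`). -/
def gramL : Matrix (Fin 22) (Fin 22) ℤ := fun i j =>
  if h : (i : ℕ) < 8 ∧ (j : ℕ) < 8 then
    - CartanMatrix.E₈ ⟨(i : ℕ), h.1⟩ ⟨(j : ℕ), h.2⟩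
  else if h : 8 ≤ (i : ℕ) ∧ (i : ℕ) < 16 ∧ 8 ≤ (j : ℕ) ∧ (j : ℕ) < 16 then
    - CartanMatrix.E₈ ⟨(i : ℕ) - 8, by omega⟩ ⟨(j : ℕ) - 8, by omega⟩
  else if ((i : ℕ) = 16 ∧ (j : ℕ) = 17) ∨ ((i : ℕ) = 17 ∧ (j : ℕ) = 16) ∨
          ((i : ℕ) = 18 ∧ (j : ℕ) = 19) ∨ ((i : ℕ) = 19 ∧ (j : ℕ) = 18) then 1
  else if ((i : ℕ) = 20 ∧ (j : ℕ) = 20) ∨ ((i : ℕ) = 21 ∧ (j : ℕ) = 21) then -2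
  else if ((i : ℕ) = 20 ∧ (j : ℕ) = 21) ∨ ((i : ℕ) = 21 ∧ (j : ℕ) = 20) then 1
  else 0

/-! The automorphism `σ` is the nontrivial element of `Gal(K/ℚ)`, so `Tr z = z + σ z` and
`N z = z * σ z`. Hence `q(x, y) = Tr (x * σ y)` is a symmetric integral form on `𝒪_K` with
`q(x, x) = 2 N(x)`, i.e. `𝒪_K` is an even binary lattice. An even binary lattice with Gram matrix
`[[2a, b], [b, 2c]]` already embeds into the summand `U ⊕ U` of `L`: if `(e, f)` and `(e', f')` are
the hyperbolic pairs (coordinates `16, 17` and `18, 19`), send the basis to `e + a f` and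
`b f + e' + c f'`. -/

namespace Algebra.IsQuadraticExtension

variable {F E : Type*} [Field F] [Field E] [Algebra F E] [IsQuadraticExtension F E] [IsGalois F E]

theorem card_algEquiv : Fintype.card (E ≃ₐ[F] E) = 2 := by
  rw [← Nat.card_eq_fintype_card, IsGalois.card_aut_eq_finrank, finrank_eq_two]

theorem algEquiv_apply_apply (σ : E ≃ₐ[F] E) (x : E) : σ (σ x) = x := by
  have h : σ ^ 2 = 1 := card_algEquiv (F := F) (E := E) ▸ pow_card_eq_one
  simpa [sq] using congr($h x)

open Classical in
theorem univ_algEquiv_eq_pair {σ : E ≃ₐ[F] E} (hσ : σ ≠ 1) :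
    (Finset.univ : Finset (E ≃ₐ[F] E)) = {1, σ} :=
  (Finset.eq_univ_of_card _ (by rw [Finset.card_pair hσ.symm, card_algEquiv])).symm

theorem algebraMap_trace {σ : E ≃ₐ[F] E} (hσ : σ ≠ 1) (x : E) :
    algebraMap F E (Algebra.trace F E x) = x + σ x := by
  classical
  rw [trace_eq_sum_automorphisms, univ_algEquiv_eq_pair hσ, Finset.sum_pair hσ.symm]
  rfl

theorem algebraMap_norm {σ : E ≃ₐ[F] E} (hσ : σ ≠ 1) (x : E) :
    algebraMap F E (Algebra.norm F x) = x * σ x := by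
  classical
  rw [norm_eq_prod_automorphisms, univ_algEquiv_eq_pair hσ, Finset.prod_pair hσ.symm]
  rfl

end Algebra.IsQuadraticExtension

open NumberField Algebra.IsQuadraticExtension

section TraceFormConj

variable {K : Type*} [Field K] [NumberField K]

noncomputable def traceFormConj (σ : K ≃ₐ[ℚ] K) : LinearMap.BilinForm ℤ (𝓞 K) :=
  (Algebra.traceForm ℤ (𝓞 K)).compl₂
    (RingOfIntegers.mapRingHom (σ : K →+* K)).toIntAlgHom.toLinearMap

theorem coe_traceFormConj (σ : K ≃ₐ[ℚ] K) (x y : 𝓞 K) :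
    (traceFormConj σ x y : ℚ) = Algebra.trace ℚ K (x * σ y) := by
  simp [traceFormConj, Algebra.coe_trace_int]

variable [Algebra.IsQuadraticExtension ℚ K] {σ : K ≃ₐ[ℚ] K}

theorem traceFormConj_isSymm (hσ : σ ≠ 1) : (traceFormConj σ).IsSymm := by
  refine ⟨fun x y => Int.cast_injective (α := ℚ) ?_⟩
  simp only [coe_traceFormConj]
  apply (algebraMap ℚ K).injective
  rw [algebraMap_trace hσ, algebraMap_trace hσ, map_mul, map_mul, algEquiv_apply_apply,
    algEquiv_apply_apply]
  ring

theorem traceFormConj_self (hσ : σ ≠ 1) (x : 𝓞 K) :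
    traceFormConj σ x x = 2 * Algebra.norm ℤ x := by
  refine Int.cast_injective (α := ℚ) ?_
  rw [coe_traceFormConj, ← algebraMap_norm hσ, Algebra.trace_algebraMap, finrank_eq_two]
  push_cast [Algebra.coe_norm_int]
  ring

end TraceFormConj

theorem gramL_col_16 : gramL.col 16 = Pi.single 17 1 := by decide

theorem gramL_col_17 : gramL.col 17 = Pi.single 16 1 := by decide

theorem gramL_col_18 : gramL.col 18 = Pi.single 19 1 := by decide

theorem gramL_col_19 : gramL.col 19 = Pi.single 18 1 := by decide

def binaryFormVec (a b c : ℤ) : Fin 2 → Fin 22 → ℤ :=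
  ![Pi.single 16 1 + a • Pi.single 17 1,
    b • Pi.single 17 1 + Pi.single 18 1 + c • Pi.single 19 1]

theorem binaryFormVec_dotProduct_mulVec (a b c : ℤ) (i j : Fin 2) :
    binaryFormVec a b c i ⬝ᵥ gramL *ᵥ binaryFormVec a b c j = !![a + a, b; b, c + c] i j := by
  fin_cases i <;> fin_cases j <;>
    simp only [binaryFormVec, Fin.zero_eta, Fin.mk_one, cons_val_zero, cons_val_one, of_apply,
      mulVec_add, mulVec_smul, mulVec_single_one, gramL_col_16, gramL_col_17, gramL_col_18,
      gramL_col_19, dotProduct_add, add_dotProduct, dotProduct_smul, smul_dotProduct,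
      single_dotProduct] <;>
    simp

theorem exists_injective_isometry_of_even {M : Type*} [AddCommGroup M] [Module.Free ℤ M]
    [Module.Finite ℤ M] (hM : Module.finrank ℤ M = 2) (B : LinearMap.BilinForm ℤ M)
    (hB : B.IsSymm) (heven : ∀ x, Even (B x x)) :
    ∃ f : M →ₗ[ℤ] (Fin 22 → ℤ), Function.Injective f ∧ ∀ x y, f x ⬝ᵥ gramL *ᵥ f y = B x y := by
  let e := Module.finBasisOfFinrankEq ℤ M hM
  obtain ⟨a, ha⟩ := heven (e 0)
  obtain ⟨c, hc⟩ := heven (e 1)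
  let f := e.constr ℤ (binaryFormVec a (B (e 0) (e 1)) c)
  have hf : ∀ i, f (e i) = binaryFormVec a (B (e 0) (e 1)) c i := e.constr_basis ℤ _
  let g : (Fin 22 → ℤ) →ₗ[ℤ] M :=
    (LinearMap.proj 16).smulRight (e 0) + (LinearMap.proj 18).smulRight (e 1)
  have hgf : g ∘ₗ f = LinearMap.id := e.ext fun i => by
    fin_cases i <;> simp [g, hf, binaryFormVec]
  have hfB : (toLinearMap₂' ℤ gramL).compl₁₂ f f = B :=
    LinearMap.BilinForm.ext_basis e fun i j => by
      fin_cases i <;> fin_cases j <;>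
        simp [hf, toLinearMap₂'_apply', binaryFormVec_dotProduct_mulVec, ha, hc, hB.eq]
  refine ⟨f, LinearMap.injective_of_comp_eq_id f g hgf, fun x y => ?_⟩
  simpa [toLinearMap₂'_apply'] using congr($hfB x y)

theorem ringOfIntegers_embeds_in_L_general
    (d : ℕ) (hd0 : 0 < d)
    (K : Type) [Field K] [NumberField K]
    (hdeg : Module.finrank ℚ K = 2)
    (ω : K) (hω : ω ^ 2 = -(d : K))
    (σ : K ≃ₐ[ℚ] K) (hσ : σ ω = -ω) :
    ∃ f : NumberField.RingOfIntegers K →ₗ[ℤ] (Fin 22 → ℤ),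
      Function.Injective f ∧
      ∀ x y : NumberField.RingOfIntegers K,
        ((f x ⬝ᵥ gramL.mulVec (f y) : ℤ) : ℚ) =
          Algebra.trace ℚ K ((x : K) * σ (y : K)) := by
  have : Algebra.IsQuadraticExtension ℚ K := ⟨hdeg⟩
  have hσ1 : σ ≠ 1 := by
    rintro rfl
    have hω0 : ω = 0 := by simpa [self_eq_neg] using hσ
    have hd : (d : K) = 0 := by simpa [hω0] using hω
    exact hd0.ne' (by exact_mod_cast hd)
  obtain ⟨f, hf, hfB⟩ := exists_injective_isometry_of_even
    (by rw [RingOfIntegers.rank, hdeg]) (traceFormConj σ) (traceFormConj_isSymm hσ1)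
    fun x => traceFormConj_self hσ1 x ▸ even_two_mul _
  exact ⟨f, hf, fun x y => by rw [hfB, coe_traceFormConj]⟩

/-- **Embedding of the ring of integers of an imaginary quadratic field into the lattice
`L = E8(-1) ⊕ E8(-1) ⊕ U ⊕ U ⊕ A2(-1)`.**  Let `d` be a squarefree positive integer,
`K = ℚ(√-d)` (an abstract number field of degree 2 over `ℚ` containing `ω` with
`ω ^ 2 = -d`), `σ` the nontrivial Galois automorphism (complex conjugation, `σ ω = -ω`),
and `q(x, y) = Tr_{K/ℚ}(x * σ y)` the trace form on `𝒪_K`.  Then there is an embedding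
of lattices `(𝒪_K, q) ↪ L`: an injective `ℤ`-linear map `f : 𝒪_K → ℤ²²` with
`B_L(f x, f y) = q(x, y)` for all `x, y`, where `B_L` has Gram matrix `gramL`. -/
theorem ringOfIntegers_embeds_in_L
    (d : ℕ) (hd : Squarefree d) (hd0 : 0 < d)
    (K : Type) [Field K] [NumberField K]
    (hdeg : Module.finrank ℚ K = 2)
    (ω : K) (hω : ω ^ 2 = -(d : K))
    (σ : K ≃ₐ[ℚ] K) (hσ : σ ω = -ω) :
    ∃ f : NumberField.RingOfIntegers K →ₗ[ℤ] (Fin 22 → ℤ),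
      Function.Injective f ∧
      ∀ x y : NumberField.RingOfIntegers K,
        ((f x ⬝ᵥ gramL.mulVec (f y) : ℤ) : ℚ) =
          Algebra.trace ℚ K ((x : K) * σ (y : K)) :=
  ringOfIntegers_embeds_in_L_general d hd0 K hdeg ω hω σ hσ
end
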